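/- arXiv:1505.03457 — 4 statements merged into one kernel-verified Lean document; each statement's English description precedes it below -/
import Mathlib

section
/- Let n ≥ 1 and k ∈ {0,1,...,n}. For all real numbers γ₁, ..., γₙ in [0,1], the sum over all subsets L ⊆ {1,...,n} of cardinality n−k of the products ∏_{j∈L} γⱼ, multiplied by k!(n−k)!/n!, is at least ((n−k)/n)·(γ₁ + ··· + γₙ) + k + 1 − n. -/
/-!
Each product is bounded below by Weierstrass' inequality
`∏_{j ∈ L} γ j ≥ 1 - #L + ∑_{j ∈ L} γ j`. Averaging this affine bound over the `n.choose (n - k)`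
sets `L` of size `n - k` (which is what the factor `k! (n - k)! / n!` does) gives the claim,
since each index lies in the fraction `(n - k) / n` of them.
-/

open Finset

theorem one_sub_card_add_sum_le_prod {ι R : Type*} [CommRing R] [LinearOrder R]
    [IsStrictOrderedRing R] (s : Finset ι) (f : ι → R) (hf : ∀ i ∈ s, f i ∈ Set.Icc 0 1) :
    1 - #s + ∑ i ∈ s, f i ≤ ∏ i ∈ s, f i := by
  induction s using Finset.cons_induction with
  | empty => simp
  | cons a s ha ih =>
    have hf' : ∀ i ∈ s, f i ∈ Set.Icc 0 1 := fun i hi => hf i (mem_cons_of_mem hi)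
    have hP₁ : ∏ i ∈ s, f i ≤ 1 := prod_le_one (fun i hi => (hf' i hi).1) fun i hi => (hf' i hi).2
    -- `f a * P ≥ f a + P - 1` because `(1 - f a) * (1 - P) ≥ 0`
    have hstep := mul_nonneg (sub_nonneg.2 (hf a (mem_cons_self a s)).2) (sub_nonneg.2 hP₁)
    rw [prod_cons, sum_cons, card_cons, Nat.cast_succ]
    linarith [ih hf']

theorem card_filter_mem_powersetCard_mul_card {α : Type*} [DecidableEq α] {s : Finset α} {a : α}
    (ha : a ∈ s) (m : ℕ) :
    #{L ∈ s.powersetCard m | a ∈ L} * #s = m * (#s).choose m := by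
  cases m with
  | zero => simp
  | succ m =>
    obtain ⟨n, hn⟩ := Nat.exists_eq_succ_of_ne_zero (card_ne_zero_of_mem ha)
    have hcount : #{L ∈ s.powersetCard (m + 1) | a ∈ L} = n.choose m := by
      simpa [hn] using card_filter_powersetCard_subset {a} s (m + 1) (by simpa) (by simp)
    rw [hcount, hn, mul_comm, Nat.add_one_mul_choose_eq, mul_comm]

theorem sum_powersetCard_sum_eq {α K : Type*} [DecidableEq α] [Semifield K] [CharZero K]
    (s : Finset α) (m : ℕ) (f : α → K) :
    ∑ L ∈ s.powersetCard m, ∑ j ∈ L, f j = m * (#s).choose m / #s * ∑ j ∈ s, f j := by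
  rw [sum_comm' (t' := s) (s' := fun j => {L ∈ s.powersetCard m | j ∈ L}), mul_sum]
  · refine sum_congr rfl fun j hj => ?_
    have hs : (#s : K) ≠ 0 := Nat.cast_ne_zero.2 (card_ne_zero_of_mem hj)
    rw [sum_const, nsmul_eq_mul]
    congr 1
    rw [eq_div_iff hs]
    exact_mod_cast card_filter_mem_powersetCard_mul_card hj m
  · intro L j
    simp only [mem_filter, mem_powersetCard]
    exact ⟨fun ⟨⟨hLs, hL⟩, hj⟩ => ⟨⟨⟨hLs, hL⟩, hj⟩, hLs hj⟩, fun ⟨h, _⟩ => ⟨h.1, h.2⟩⟩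

theorem gamma_angles_ineq_general (n : ℕ) (k : ℕ) (hk : k ≤ n)
    (γ : Fin n → ℝ) (hγ : ∀ j, γ j ∈ Set.Icc (0 : ℝ) 1) :
    ((k.factorial : ℝ) * ((n - k).factorial : ℝ) / (n.factorial : ℝ)) *
      ∑ L ∈ Finset.powersetCard (n - k) (Finset.univ : Finset (Fin n)), ∏ j ∈ L, γ j
    ≥ (((n : ℝ) - (k : ℝ)) / (n : ℝ)) * ∑ j, γ j + (k : ℝ) + 1 - (n : ℝ) := by
  have hC : (k.factorial * (n - k).factorial / n.factorial : ℝ) = (n.choose (n - k) : ℝ)⁻¹ := by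
    rw [Nat.choose_symm hk, Nat.cast_choose ℝ hk, inv_div]
  have hC₀ : 0 < (n.choose (n - k) : ℝ) := by exact_mod_cast Nat.choose_pos (Nat.sub_le n k)
  have hbound : ∑ L ∈ powersetCard (n - k) univ, (1 - (n - k : ℕ) + ∑ j ∈ L, γ j)
      ≤ ∑ L ∈ powersetCard (n - k) univ, ∏ j ∈ L, γ j := by
    refine sum_le_sum fun L hL => ?_
    rw [← (mem_powersetCard.1 hL).2]
    exact one_sub_card_add_sum_le_prod L γ fun j _ => hγ j
  rw [sum_add_distrib, sum_const, card_powersetCard, sum_powersetCard_sum_eq, card_univ,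
    Fintype.card_fin, nsmul_eq_mul, Nat.cast_sub hk] at hbound
  rw [hC, ge_iff_le]
  calc ((n : ℝ) - k) / n * ∑ j, γ j + k + 1 - n
      = (n.choose (n - k) : ℝ)⁻¹ * (n.choose (n - k) * (1 - (n - k))
          + (n - k) * n.choose (n - k) / n * ∑ j, γ j) := by
        field_simp
        ring
    _ ≤ (n.choose (n - k) : ℝ)⁻¹ * ∑ L ∈ powersetCard (n - k) univ, ∏ j ∈ L, γ j := by gcongr

theorem gamma_angles_ineq (n : ℕ) (hn : 0 < n) (k : ℕ) (hk : k ≤ n)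
    (γ : Fin n → ℝ) (hγ : ∀ j, γ j ∈ Set.Icc (0 : ℝ) 1) :
    ((k.factorial : ℝ) * ((n - k).factorial : ℝ) / (n.factorial : ℝ)) *
      ∑ L ∈ Finset.powersetCard (n - k) (Finset.univ : Finset (Fin n)), ∏ j ∈ L, γ j
    ≥ (((n : ℝ) - (k : ℝ)) / (n : ℝ)) * ∑ j, γ j + (k : ℝ) + 1 - (n : ℝ) :=
  gamma_angles_ineq_general n k hk γ hγ
end

section
/- Let n ≥ 2, p ∈ {1,...,n−1}, and let β₁, ..., βₙ be positive real numbers. Then (n−p) · Σ_{J⊆{1,...,n}, |J|=p} (∏_{j∈J} βⱼ)·(Σ_{j∈J} βⱼ) ≥ p(p+1) · Σ_{K⊆{1,...,n}, |K|=p+1} ∏_{k∈K} βₖ. -/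
open Finset in
private lemma star_pair_reindex {n : ℕ} (p : ℕ) (F : Finset (Fin n) → ℝ) :
    ∑ K ∈ powersetCard (p+1) (univ : Finset (Fin n)), ∑ j ∈ K, F (K.erase j)
    = ∑ J ∈ powersetCard p (univ : Finset (Fin n)), ∑ _i ∈ Jᶜ, F J := by
  rw [Finset.sum_sigma', Finset.sum_sigma']
  refine Finset.sum_bij' (fun x _ => (⟨x.1.erase x.2, x.2⟩ : Σ _ : Finset (Fin n), Fin n))
    (fun x _ => (⟨insert x.2 x.1, x.2⟩ : Σ _ : Finset (Fin n), Fin n)) ?_ ?_ ?_ ?_ ?_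
  · rintro ⟨K, j⟩ h
    simp only [mem_sigma, mem_powersetCard_univ] at h ⊢
    obtain ⟨hc, hj⟩ := h
    constructor
    · rw [card_erase_of_mem hj, hc]; omega
    · simp [Finset.mem_compl]
  · rintro ⟨J, i⟩ h
    simp only [mem_sigma, mem_powersetCard_univ, Finset.mem_compl] at h ⊢
    obtain ⟨hc, hi⟩ := h
    exact ⟨by rw [card_insert_of_notMem hi, hc], mem_insert_self _ _⟩
  · rintro ⟨K, j⟩ h
    simp only [mem_sigma, mem_powersetCard_univ] at h
    simp [Finset.insert_erase h.2]
  · rintro ⟨J, i⟩ h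
    simp only [mem_sigma, mem_powersetCard_univ, Finset.mem_compl] at h
    simp [Finset.erase_insert h.2]
  · rintro ⟨K, j⟩ h
    rfl

open Finset in
private lemma star_per_K {n p : ℕ} (β : Fin n → ℝ) (hβ : ∀ j, 0 < β j)
    (K : Finset (Fin n)) (hK : K.card = p + 1) :
    ∑ j ∈ K, (∏ i ∈ K.erase j, β i) * (∑ i ∈ K.erase j, β i)
      ≥ ((p:ℝ) * ((p:ℝ)+1)) * ∏ i ∈ K, β i := by
  have hprodpos : 0 < ∏ i ∈ K, β i := Finset.prod_pos (fun i _ => hβ i)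
  set h : Fin n → Fin n → ℝ := fun i j => if i = j then 0 else β i / β j with hh
  have step1 : ∀ j ∈ K, (∏ i ∈ K.erase j, β i) * (∑ i ∈ K.erase j, β i)
      = (∏ i ∈ K, β i) * ∑ i ∈ K, h i j := by
    intro j hj
    have hpe : (∏ i ∈ K.erase j, β i) = (∏ i ∈ K, β i) / β j := by
      rw [eq_div_iff (ne_of_gt (hβ j))]
      exact Finset.prod_erase_mul K β hj
    have hz : h j j = 0 := by simp [hh]
    have hse : ∑ i ∈ K, h i j = ∑ i ∈ K.erase j, β i / β j := by
      rw [← Finset.sum_erase (f := fun i => h i j) K hz]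
      exact Finset.sum_congr rfl (fun i hi => by simp [hh, (Finset.mem_erase.mp hi).1])
    rw [hse, hpe, ← Finset.sum_div, div_mul_eq_mul_div, mul_div_assoc]
  rw [Finset.sum_congr rfl step1, ← Finset.mul_sum]
  set T : ℝ := ∑ j ∈ K, ∑ i ∈ K, h i j with hT
  have hTge : T ≥ (p:ℝ) * ((p:ℝ)+1) := by
    have h2 : T + T = ∑ j ∈ K, ∑ i ∈ K, (h i j + h j i) := by
      simp only [Finset.sum_add_distrib]
      rw [hT, Finset.sum_comm]
    have hbound : ∑ j ∈ K, ∑ i ∈ K, (h i j + h j i)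
        ≥ ∑ j ∈ K, ∑ i ∈ K, (if i = j then (0:ℝ) else 2) := by
      refine Finset.sum_le_sum (fun j _ => Finset.sum_le_sum (fun i _ => ?_))
      by_cases hij : i = j
      · simp [hh, hij]
      · simp only [hh, hij, if_false, Ne.symm hij]
        have h1 := hβ i; have h2 := hβ j
        rw [div_add_div _ _ (ne_of_gt h2) (ne_of_gt h1), le_div_iff₀ (by positivity)]
        nlinarith [sq_nonneg (β i - β j)]
    have hinner : ∀ j ∈ K, (∑ i ∈ K, if i = j then (0:ℝ) else 2) = 2 * (p:ℝ) := by
      intro j hj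
      have : ∑ i ∈ K, (if i = j then (0:ℝ) else 2)
          = ∑ i ∈ K, ((2:ℝ) - if i = j then 2 else 0) := by
        refine Finset.sum_congr rfl (fun i _ => ?_)
        by_cases hij : i = j <;> simp [hij]
      rw [this, Finset.sum_sub_distrib, Finset.sum_ite_eq' K j (fun _ => (2:ℝ)),
        if_pos hj, Finset.sum_const, hK, nsmul_eq_mul]
      push_cast; ring
    have hcalc : ∑ j ∈ K, ∑ i ∈ K, (if i = j then (0:ℝ) else 2)
        = ((p:ℝ)+1) * (2 * p) := by
      rw [Finset.sum_congr rfl hinner, Finset.sum_const, hK, nsmul_eq_mul]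
      push_cast; ring
    nlinarith [h2, hbound, hcalc]
  calc (∏ i ∈ K, β i) * T ≥ (∏ i ∈ K, β i) * ((p:ℝ) * ((p:ℝ)+1)) :=
        mul_le_mul_of_nonneg_left hTge (le_of_lt hprodpos)
    _ = ((p:ℝ) * ((p:ℝ)+1)) * ∏ i ∈ K, β i := by ring

theorem star_p_ineq (n : ℕ) (hn : 2 ≤ n) (p : ℕ) (hp1 : 1 ≤ p) (hp2 : p ≤ n - 1)
    (β : Fin n → ℝ) (hβ : ∀ j, 0 < β j) :
    ((n : ℝ) - (p : ℝ)) *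
      ∑ J ∈ Finset.powersetCard p (Finset.univ : Finset (Fin n)),
        (∏ j ∈ J, β j) * (∑ j ∈ J, β j)
    ≥ (p : ℝ) * ((p : ℝ) + 1) *
      ∑ K ∈ Finset.powersetCard (p + 1) (Finset.univ : Finset (Fin n)), ∏ j ∈ K, β j := by
  have hpn : p ≤ n := by omega
  set f : Finset (Fin n) → ℝ := fun J => (∏ j ∈ J, β j) * (∑ j ∈ J, β j) with hf
  calc ((n : ℝ) - (p : ℝ)) * ∑ J ∈ Finset.powersetCard p Finset.univ, f J
      = ∑ J ∈ Finset.powersetCard p (Finset.univ : Finset (Fin n)), ∑ _i ∈ Jᶜ, f J := by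
        rw [Finset.mul_sum]
        refine Finset.sum_congr rfl (fun J hJ => ?_)
        rw [Finset.sum_const, Finset.card_compl,
          (Finset.mem_powersetCard_univ.mp hJ), nsmul_eq_mul, Fintype.card_fin,
          Nat.cast_sub hpn]
    _ = ∑ K ∈ Finset.powersetCard (p+1) (Finset.univ : Finset (Fin n)),
          ∑ j ∈ K, f (K.erase j) := (star_pair_reindex p f).symm
    _ ≥ ∑ K ∈ Finset.powersetCard (p+1) (Finset.univ : Finset (Fin n)),
          ((p:ℝ) * ((p:ℝ)+1)) * ∏ i ∈ K, β i := by
        refine Finset.sum_le_sum (fun K hK => ?_)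
        exact star_per_K β hβ K (Finset.mem_powersetCard_univ.mp hK)
    _ = (p : ℝ) * ((p : ℝ) + 1) *
          ∑ K ∈ Finset.powersetCard (p + 1) (Finset.univ : Finset (Fin n)),
            ∏ j ∈ K, β j := by rw [Finset.mul_sum]
end

section
/- Let α > 0 be a Hermitian (positive definite) n×n matrix given in diagonalized form as the identity, and let β be a positive semidefinite diagonal matrix with entries βⱼ ∈ [0,1]. Then for every k ∈ {0,...,n}: (1/binom(n,n−k)) Σ_{|L|=n−k} ∏_{j∈L}(1−βⱼ) ≥ 1 − ((n−k)/n) Σ_{j=1}^n βⱼ. Equivalently, in form language: (α−β)^{n−k}∧α^k ≥ α^n − (n−k)·α^{n−1}∧β pointwise. -/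
/-!
Each product satisfies the Weierstrass inequality `∏_{j∈L} (1 - βⱼ) ≥ 1 - ∑_{j∈L} βⱼ`. Averaging
over the `m`-subsets `L`, with `m = n - k`, the right-hand side becomes `1 - (m / n) ∑ⱼ βⱼ`, because
each `j` lies in `(n-1).choose (m-1)` of the `n.choose m` subsets, and `n * (n-1).choose (m-1) =
m * n.choose m`.
-/

open Finset

section

variable {ι R : Type*}

theorem Finset.one_sub_sum_le_prod_one_sub [CommRing R] [LinearOrder R] [IsStrictOrderedRing R]
    (s : Finset ι) {f : ι → R} (hf₀ : ∀ i ∈ s, 0 ≤ f i) (hf₁ : ∀ i ∈ s, f i ≤ 1) :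
    1 - ∑ i ∈ s, f i ≤ ∏ i ∈ s, (1 - f i) := by
  classical
  induction s using Finset.induction with
  | empty => simp
  | @insert a s ha ih =>
    rw [sum_insert ha, prod_insert ha]
    have hs₀ : 0 ≤ ∑ i ∈ s, f i := sum_nonneg fun i hi => hf₀ i (mem_insert_of_mem hi)
    have hprod := ih (fun i hi => hf₀ i (mem_insert_of_mem hi))
      (fun i hi => hf₁ i (mem_insert_of_mem hi))
    have ha₀ := hf₀ a (mem_insert_self a s)
    have ha₁ := hf₁ a (mem_insert_self a s)
    calc 1 - (f a + ∑ i ∈ s, f i) ≤ (1 - f a) * (1 - ∑ i ∈ s, f i) := by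
          nlinarith [mul_nonneg ha₀ hs₀]
      _ ≤ (1 - f a) * ∏ i ∈ s, (1 - f i) := mul_le_mul_of_nonneg_left hprod (sub_nonneg.2 ha₁)

variable [DecidableEq ι]

theorem Finset.sum_powersetCard_sum [AddCommMonoid R] (s : Finset ι) {m : ℕ} (hm : m ≠ 0)
    (f : ι → R) :
    ∑ L ∈ s.powersetCard m, ∑ i ∈ L, f i = (#s - 1).choose (m - 1) • ∑ i ∈ s, f i := by
  rw [sum_comm' (t' := s) (s' := fun i => {L ∈ s.powersetCard m | i ∈ L}), smul_sum]
  · refine sum_congr rfl fun i hi => ?_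
    have hcount := card_filter_powersetCard_subset {i} s m (singleton_subset_iff.2 hi)
      (by simpa using Nat.one_le_iff_ne_zero.2 hm)
    simp only [singleton_subset_iff, card_singleton] at hcount
    rw [sum_const, hcount]
  · intro L i
    simp only [mem_filter, mem_powersetCard]
    exact ⟨fun h => ⟨h, h.1.1 h.2⟩, And.left⟩

theorem Finset.card_nsmul_sum_powersetCard_sum [AddCommMonoid R] (s : Finset ι) (m : ℕ)
    (f : ι → R) :
    #s • ∑ L ∈ s.powersetCard m, ∑ i ∈ L, f i = (m * (#s).choose m) • ∑ i ∈ s, f i := by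
  rcases Nat.eq_zero_or_pos m with rfl | hm
  · simp
  rw [sum_powersetCard_sum s hm.ne' f, smul_smul]
  obtain ⟨m, rfl⟩ := Nat.exists_eq_add_of_le' hm
  rcases Nat.eq_zero_or_pos #s with hs | hs
  · simp [hs]
  obtain ⟨n, hn⟩ := Nat.exists_eq_add_of_le' hs
  rw [hn, Nat.add_sub_cancel, Nat.add_sub_cancel, Nat.add_one_mul_choose_eq, mul_comm]

theorem Finset.one_sub_mul_sum_le_inv_choose_mul_sum_prod [Field R] [LinearOrder R]
    [IsStrictOrderedRing R] (s : Finset ι) {m : ℕ} (hm : m ≤ #s) {f : ι → R}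
    (hf₀ : ∀ i ∈ s, 0 ≤ f i) (hf₁ : ∀ i ∈ s, f i ≤ 1) :
    1 - (m / #s) * ∑ i ∈ s, f i ≤
      ((#s).choose m : R)⁻¹ * ∑ L ∈ s.powersetCard m, ∏ i ∈ L, (1 - f i) := by
  rcases Nat.eq_zero_or_pos #s with hs | hs
  · obtain rfl : m = 0 := by omega
    simp [card_eq_zero.1 hs]
  have hchoose : (0 : R) < (#s).choose m := by exact_mod_cast Nat.choose_pos hm
  have hdouble : (#s : R) * ∑ L ∈ s.powersetCard m, ∑ i ∈ L, f i =
      m * (#s).choose m * ∑ i ∈ s, f i := by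
    simpa only [nsmul_eq_mul, Nat.cast_mul] using card_nsmul_sum_powersetCard_sum s m f
  calc 1 - (m / #s) * ∑ i ∈ s, f i
      = ((#s).choose m : R)⁻¹ * ∑ L ∈ s.powersetCard m, (1 - ∑ i ∈ L, f i) := by
        rw [sum_sub_distrib, sum_const, card_powersetCard, nsmul_one]
        field_simp
        linear_combination hdouble
    _ ≤ ((#s).choose m : R)⁻¹ * ∑ L ∈ s.powersetCard m, ∏ i ∈ L, (1 - f i) := by
        gcongr with L hL
        have hLs := (mem_powersetCard.1 hL).1
        exact one_sub_sum_le_prod_one_sub L (fun i hi => hf₀ i (hLs hi))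
          (fun i hi => hf₁ i (hLs hi))

end

theorem alpha_beta_nef_angles_coord_general (n : ℕ) (k : ℕ) (hk : k ≤ n)
    (β : Fin n → ℝ) (hβ : ∀ j, β j ∈ Set.Icc (0 : ℝ) 1) :
    ((1 : ℝ) / (n.choose (n - k) : ℝ)) *
      ∑ L ∈ Finset.powersetCard (n - k) (Finset.univ : Finset (Fin n)),
        ∏ j ∈ L, (1 - β j)
    ≥ 1 - (((n : ℝ) - (k : ℝ)) / (n : ℝ)) * ∑ j, β j := by
  have key := one_sub_mul_sum_le_inv_choose_mul_sum_prod (univ : Finset (Fin n))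
    (m := n - k) (by simp) (fun j _ => (hβ j).1) (fun j _ => (hβ j).2)
  rwa [card_univ, Fintype.card_fin, Nat.cast_sub hk, ← one_div] at key

theorem alpha_beta_nef_angles_coord (n : ℕ) (hn : 0 < n) (k : ℕ) (hk : k ≤ n)
    (β : Fin n → ℝ) (hβ : ∀ j, β j ∈ Set.Icc (0 : ℝ) 1) :
    ((1 : ℝ) / (n.choose (n - k) : ℝ)) *
      ∑ L ∈ Finset.powersetCard (n - k) (Finset.univ : Finset (Fin n)),
        ∏ j ∈ L, (1 - β j)
    ≥ 1 - (((n : ℝ) - (k : ℝ)) / (n : ℝ)) * ∑ j, β j :=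
  alpha_beta_nef_angles_coord_general n k hk β hβ
end

section
/- Let a, b be real numbers with a > 0 (interpreted as a = {α}^n) and b ≥ 0 (interpreted as b = {α}^{n−1}.{β}), n ≥ 2, a − n·b > 0, and s₀ ∈ (0,1). Set R := a/b (so R > n), A := 1 − (n/R)(1 − s₀), and define g(t) := ((A·t − s₀)/(t − s₀))^n · (a − (s₀(t−1)/(A·t − s₀))·n·b) for t ∈ [1, R/n]. Then g is strictly increasing on [1, R/n]. -/
/-!
Since `a * A = a - n b (1 - s₀)`, the second factor of `g` simplifies to
`(a - n b) (t - s₀) / (A t - s₀)`, so `g t = (a - n b) φ(t)^(n - 1)` with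
`φ(t) = (A t - s₀) / (t - s₀)`. As `s₀ < A < 1`, the Möbius map `φ` is positive and
strictly increasing for `t > s₀`, and `n - 1 ≥ 1`.
-/

open Set

theorem strictMonoOn_mul_sub_div_sub {p q r : ℝ} (h : p * r < q) :
    StrictMonoOn (fun t => (p * t - q) / (t - r)) (Ioi r) := by
  intro x hx y hy hxy
  rw [mem_Ioi] at hx hy
  rw [div_lt_div_iff₀ (sub_pos.2 hx) (sub_pos.2 hy)]
  nlinarith [mul_pos (sub_pos.2 h) (sub_pos.2 hxy)]

theorem StrictMonoOn.const_mul_pow {R : Type*} [Semiring R] [PartialOrder R]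
    [IsStrictOrderedRing R] {f : R → R} {s : Set R} (hf : StrictMonoOn f s)
    (hf₀ : ∀ x ∈ s, 0 ≤ f x) {m : ℕ} (hm : m ≠ 0) {c : R} (hc : 0 < c) :
    StrictMonoOn (fun x => c * f x ^ m) s := fun x hx _ hy hxy =>
  mul_lt_mul_of_pos_left (pow_lt_pow_left₀ (hf hx hy hxy) (hf₀ x hx) hm) hc

theorem sub_div_mul_mul_eq {a b n A s t : ℝ} (hA : a * A = a - n * b * (1 - s))
    (ht : A * t - s ≠ 0) :
    a - s * (t - 1) / (A * t - s) * n * b = (a - n * b) * (t - s) / (A * t - s) := by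
  rw [eq_div_iff ht, sub_mul, div_mul_eq_mul_div, div_mul_eq_mul_div, div_mul_cancel₀ _ ht]
  linear_combination t * hA

theorem g_strict_mono_general (n : ℕ) (hn : 2 ≤ n) (a b : ℝ) (hb : 0 < b)
    (hab : a - (n : ℝ) * b > 0) (s₀ : ℝ) (hs₀ : s₀ ∈ Set.Ioo (0 : ℝ) 1)
    (R A : ℝ) (hR : R = a / b) (hA : A = 1 - ((n : ℝ) / R) * (1 - s₀)) :
    StrictMonoOn
      (fun t : ℝ => ((A * t - s₀) / (t - s₀)) ^ n *
        (a - (s₀ * (t - 1) / (A * t - s₀)) * (n : ℝ) * b))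
      (Set.Icc 1 (R / (n : ℝ))) := by
  obtain ⟨hs₀_pos, hs₀_lt_one⟩ := hs₀
  have hnb : 0 < (n : ℝ) * b := by positivity
  have ha : 0 < a := by linarith
  have haA : a * A = a - n * b * (1 - s₀) := by
    rw [hA, hR]
    field_simp
  have hA_lt_one : A < 1 := by nlinarith
  have hs₀_lt_A : s₀ < A := by nlinarith
  have ht : ∀ t ∈ Icc 1 (R / n), 0 < t - s₀ ∧ 0 < A * t - s₀ := fun t ht =>
    ⟨by linarith [ht.1], by nlinarith [ht.1]⟩
  have hφ : StrictMonoOn (fun t => (A * t - s₀) / (t - s₀)) (Icc 1 (R / n)) :=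
    (strictMonoOn_mul_sub_div_sub (by nlinarith)).mono fun t hmem => sub_pos.1 (ht t hmem).1
  refine (hφ.const_mul_pow (fun t hmem => (div_pos (ht t hmem).2 (ht t hmem).1).le)
    (by omega : n - 1 ≠ 0) hab).congr fun t hmem => ?_
  obtain ⟨hts, hAts⟩ := ht t hmem
  dsimp only
  have hcancel :
      (A * t - s₀) / (t - s₀) * ((a - n * b) * (t - s₀) / (A * t - s₀)) = a - n * b := by
    field_simp
  rw [sub_div_mul_mul_eq haA hAts.ne', ← pow_sub_one_mul (by omega : n ≠ 0), mul_assoc, hcancel,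
    mul_comm]

theorem g_strict_mono (n : ℕ) (hn : 2 ≤ n) (a b : ℝ) (ha : 0 < a) (hb : 0 < b)
    (hab : a - (n : ℝ) * b > 0) (s₀ : ℝ) (hs₀ : s₀ ∈ Set.Ioo (0 : ℝ) 1)
    (R A : ℝ) (hR : R = a / b) (hA : A = 1 - ((n : ℝ) / R) * (1 - s₀)) :
    StrictMonoOn
      (fun t : ℝ => ((A * t - s₀) / (t - s₀)) ^ n *
        (a - (s₀ * (t - 1) / (A * t - s₀)) * (n : ℝ) * b))
      (Set.Icc 1 (R / (n : ℝ))) :=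
  g_strict_mono_general n hn a b hb hab s₀ hs₀ R A hR hA
end
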